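/- arXiv:2402.16855 — 2 statements merged into one kernel-verified Lean document; each statement's English description precedes it below -/
import Mathlib

section
/- Let n ≥ 1, let p, r, a ∈ ℝⁿ with pᵢ ≥ 0, rᵢ > 0, and aᵢ ≥ 0 for all i, let α, β > 0, and let μ ∈ ℝ be such that Σ_{i ∈ N_c(μ)} pᵢ > 0, where N_c(μ) = {i : 0 < μ·pᵢ − β·rᵢ/α < aᵢ}. Then T(μ) < μ if and only if Q(μ) > 1, where T is the Newton update and Q(μ) = Σᵢ min(max(μ·pᵢ − β·rᵢ/α, 0), aᵢ). -/
/-!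
Off `N_c(μ) ∪ N_u(μ)` the clipped terms of `Q(μ)` vanish, so
`Q(μ) = μ · Σ_{N_c} pᵢ − Σ_{N_c} β rᵢ / α + Σ_{N_u} aᵢ`; multiplying `T(μ) < μ` by the positive
denominator `Σ_{N_c} pᵢ` turns it into exactly `1 < Q(μ)`.
-/

theorem min_max_zero_eq_ite_add_ite {α : Type*} [AddZeroClass α] [LinearOrder α] {x a : α}
    (ha : 0 ≤ a) :
    min (max x 0) a = (if 0 < x ∧ x < a then x else 0) + (if a ≤ x then a else 0) := by
  split_ifs with hc hu hu
  · exact absurd hu hc.2.not_ge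
  · simp [max_eq_left hc.1.le, min_eq_left hc.2.le]
  · simp [max_eq_left (ha.trans hu), min_eq_right hu]
  · have hx : x ≤ 0 := not_lt.mp fun hx => hc ⟨hx, not_le.mp hu⟩
    simp [max_eq_right hx, min_eq_left ha]

theorem Finset.sum_min_max_zero {ι α : Type*} [Fintype ι] [AddCommMonoid α] [LinearOrder α]
    (x a : ι → α) (ha : ∀ i, 0 ≤ a i) :
    ∑ i, min (max (x i) 0) (a i) =
      ∑ i with 0 < x i ∧ x i < a i, x i + ∑ i with a i ≤ x i, a i := by
  simp only [min_max_zero_eq_ite_add_ite (ha _), Finset.sum_add_distrib, Finset.sum_ite,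
    Finset.sum_const_zero, add_zero]

open Finset in
theorem newton_decrease_iff_general (n : ℕ) (p r a : Fin n → ℝ)
    (ha : ∀ i, 0 ≤ a i)
    (α β : ℝ)
    (Q : ℝ → ℝ)
    (hQ : Q = fun μ => ∑ i, min (max (μ * p i - β * r i / α) 0) (a i))
    (Nc Nu : ℝ → Finset (Fin n))
    (hNc : ∀ μ, Nc μ = {i | 0 < μ * p i - β * r i / α ∧ μ * p i - β * r i / α < a i})
    (hNu : ∀ μ, Nu μ = {i | a i ≤ μ * p i - β * r i / α})
    (T : ℝ → ℝ)
    (hT : T = fun μ =>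
      (1 + ∑ i ∈ Nc μ, β * r i / α - ∑ i ∈ Nu μ, a i) / ∑ i ∈ Nc μ, p i)
    (μ : ℝ) (hden : 0 < ∑ i ∈ Nc μ, p i) :
    T μ < μ ↔ 1 < Q μ := by
  -- `hNc` and `hNu` elaborate as equations between the coerced sets.
  have hNcμ : Nc μ = ({i | 0 < μ * p i - β * r i / α ∧ μ * p i - β * r i / α < a i} :
      Finset (Fin n)) := by
    ext i; simpa using Set.ext_iff.mp (hNc μ) i
  have hNuμ : Nu μ = ({i | a i ≤ μ * p i - β * r i / α} : Finset (Fin n)) := by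
    ext i; simpa using Set.ext_iff.mp (hNu μ) i
  have hQμ : Q μ = μ * ∑ i ∈ Nc μ, p i - ∑ i ∈ Nc μ, β * r i / α + ∑ i ∈ Nu μ, a i := by
    simp only [hQ]
    rw [sum_min_max_zero _ _ ha, ← hNcμ, ← hNuμ, mul_sum, ← sum_sub_distrib]
  rw [hT, hQμ, div_lt_iff₀ hden]
  constructor <;> intro h <;> linarith

open Finset in
/-- The Newton update T satisfies T(μ) < μ ↔ Q(μ) > 1. -/
theorem newton_decrease_iff (n : ℕ) (hn : 1 ≤ n) (p r a : Fin n → ℝ)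
    (hp : ∀ i, 0 ≤ p i) (hr : ∀ i, 0 < r i) (ha : ∀ i, 0 ≤ a i)
    (α β : ℝ) (hα : 0 < α) (hβ : 0 < β)
    (Q : ℝ → ℝ)
    (hQ : Q = fun μ => ∑ i, min (max (μ * p i - β * r i / α) 0) (a i))
    (Nc Nu : ℝ → Finset (Fin n))
    (hNc : ∀ μ, Nc μ = {i | 0 < μ * p i - β * r i / α ∧ μ * p i - β * r i / α < a i})
    (hNu : ∀ μ, Nu μ = {i | a i ≤ μ * p i - β * r i / α})
    (T : ℝ → ℝ)
    (hT : T = fun μ =>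
      (1 + ∑ i ∈ Nc μ, β * r i / α - ∑ i ∈ Nu μ, a i) / ∑ i ∈ Nc μ, p i)
    (μ : ℝ) (hden : 0 < ∑ i ∈ Nc μ, p i) :
    T μ < μ ↔ 1 < Q μ :=
  newton_decrease_iff_general n p r a ha α β Q hQ Nc Nu hNc hNu T hT μ hden
end

section
/- (Lemma on Newton's method) Let n ≥ 1, let p, r, a ∈ ℝⁿ with pᵢ ≥ 0, rᵢ > 0, and aᵢ ≥ 0 for all i, and let α, β > 0. Suppose μ* > 0 is the unique positive root of the equation Q(μ) = 1, i.e. Q(μ*) = 1 and Q(μ) ≠ 1 for every μ > 0 with μ ≠ μ*. Let μ > 0 be any point at which the Newton update T(μ) is defined, i.e. Σ_{i ∈ N_c(μ)} pᵢ > 0. Then μ < T(μ) if and only if μ < μ*, and T(μ) < μ if and only if μ > μ*. Consequently, in Newton's method producing iterates μ^(τ+1) = T(μ^(τ)), one has μ^(τ) < μ^(τ+1) if and only if μ^(τ) < μ*, and μ^(τ) > μ^(τ+1) if and only if μ^(τ) > μ*. -/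
/-!
At μ the function Q coincides with the affine function
L(ν) = ν · Σ_{N_c(μ)} pᵢ − Σ_{N_c(μ)} β rᵢ / α + Σ_{N_u(μ)} aᵢ, and T(μ) is the root of L(ν) = 1.
As L has positive slope, μ < T(μ) iff Q(μ) = L(μ) < 1 (and T(μ) < μ iff Q(μ) > 1). Since Q is
monotone and μ* is its only positive solution of Q = 1, Q(μ) < 1 iff μ < μ* and Q(μ) > 1 iff μ > μ*.
-/

open Finset

section ClampedSum

variable {ι α : Type*} [Fintype ι] [AddCommMonoid α] [LinearOrder α]

theorem min_max_zero_eq_ite {x a : α} (ha : 0 ≤ a) :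
    min (max x 0) a = (if 0 < x ∧ x < a then x else 0) + (if a ≤ x then a else 0) := by
  split_ifs <;> grind

theorem sum_min_max_zero_eq {x a : ι → α} (ha : ∀ i, 0 ≤ a i) {Nc Nu : Finset ι}
    (hNc : (Nc : Set ι) = {i | 0 < x i ∧ x i < a i}) (hNu : (Nu : Set ι) = {i | a i ≤ x i}) :
    ∑ i, min (max (x i) 0) (a i) = ∑ i ∈ Nc, x i + ∑ i ∈ Nu, a i := by
  classical
  obtain rfl : Nc = ({i | 0 < x i ∧ x i < a i} : Finset ι) :=
    coe_injective (hNc.trans (coe_filter_univ _).symm)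
  obtain rfl : Nu = ({i | a i ≤ x i} : Finset ι) :=
    coe_injective (hNu.trans (coe_filter_univ _).symm)
  simp_rw [min_max_zero_eq_ite (ha _), sum_add_distrib, sum_filter]

end ClampedSum

section UniqueSolution

variable {α β : Type*} [LinearOrder α] [LinearOrder β] {f : α → β} {s x : α} {c : β}

theorem Monotone.apply_lt_iff_lt_of_unique (hf : Monotone f) (hs : f s = c)
    (hx : x ≠ s → f x ≠ c) : f x < c ↔ x < s := by
  refine ⟨fun h => lt_of_not_ge fun hsx => (hs ▸ hf hsx).not_gt h, fun h => ?_⟩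
  exact lt_of_le_of_ne (hs ▸ hf h.le) (hx h.ne)

theorem Monotone.lt_apply_iff_lt_of_unique (hf : Monotone f) (hs : f s = c)
    (hx : x ≠ s → f x ≠ c) : c < f x ↔ s < x :=
  hf.dual.apply_lt_iff_lt_of_unique hs hx

end UniqueSolution

section NewtonStep

variable {𝕜 : Type*} [Field 𝕜] [LinearOrder 𝕜] [IsStrictOrderedRing 𝕜]

theorem monotone_sum_min_max {ι : Type*} [Fintype ι] {p : ι → 𝕜} (hp : ∀ i, 0 ≤ p i)
    (c a : ι → 𝕜) : Monotone fun μ => ∑ i, min (max (μ * p i - c i) 0) (a i) :=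
  fun _ _ h => sum_le_sum fun i _ => by have := hp i; gcongr

variable {μ s C U : 𝕜}

theorem lt_affine_root_iff (hs : 0 < s) : μ < (1 + C - U) / s ↔ μ * s - C + U < 1 := by
  rw [lt_div_iff₀ hs]
  constructor <;> intro h <;> linarith

theorem affine_root_lt_iff (hs : 0 < s) : (1 + C - U) / s < μ ↔ 1 < μ * s - C + U := by
  rw [div_lt_iff₀ hs]
  constructor <;> intro h <;> linarith

end NewtonStep

open Finset in
theorem newton_bracketing_general (n : ℕ) (p r a : Fin n → ℝ)
    (hp : ∀ i, 0 ≤ p i) (ha : ∀ i, 0 ≤ a i)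
    (α β : ℝ)
    (Q : ℝ → ℝ)
    (hQ : Q = fun μ => ∑ i, min (max (μ * p i - β * r i / α) 0) (a i))
    (Nc Nu : ℝ → Finset (Fin n))
    (hNc : ∀ μ, Nc μ = {i | 0 < μ * p i - β * r i / α ∧ μ * p i - β * r i / α < a i})
    (hNu : ∀ μ, Nu μ = {i | a i ≤ μ * p i - β * r i / α})
    (T : ℝ → ℝ)
    (hT : T = fun μ =>
      (1 + ∑ i ∈ Nc μ, β * r i / α - ∑ i ∈ Nu μ, a i) / ∑ i ∈ Nc μ, p i)
    (μs : ℝ) (hroot : Q μs = 1)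
    (huniq : ∀ μ : ℝ, 0 < μ → μ ≠ μs → Q μ ≠ 1)
    (μ : ℝ) (hμ : 0 < μ) (hden : 0 < ∑ i ∈ Nc μ, p i) :
    (μ < T μ ↔ μ < μs) ∧ (T μ < μ ↔ μs < μ) := by
  have hQ_mono : Monotone Q := hQ ▸ monotone_sum_min_max hp _ a
  have hQμ : Q μ = μ * ∑ i ∈ Nc μ, p i - ∑ i ∈ Nc μ, β * r i / α + ∑ i ∈ Nu μ, a i := by
    simp only [hQ]
    rw [sum_min_max_zero_eq ha (hNc μ) (hNu μ), sum_sub_distrib, mul_sum]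
  simp only [hT]
  rw [lt_affine_root_iff hden, affine_root_lt_iff hden, ← hQμ]
  exact ⟨hQ_mono.apply_lt_iff_lt_of_unique hroot (huniq μ hμ),
    hQ_mono.lt_apply_iff_lt_of_unique hroot (huniq μ hμ)⟩

open Finset in
/-- Lemma on Newton's method: with μ* the unique positive root of
Q(μ) = 1, and μ > 0 where T is defined: μ < T(μ) ↔ μ < μ* and T(μ) < μ ↔ μ > μ*. -/
theorem newton_bracketing (n : ℕ) (hn : 1 ≤ n) (p r a : Fin n → ℝ)
    (hp : ∀ i, 0 ≤ p i) (hr : ∀ i, 0 < r i) (ha : ∀ i, 0 ≤ a i)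
    (α β : ℝ) (hα : 0 < α) (hβ : 0 < β)
    (Q : ℝ → ℝ)
    (hQ : Q = fun μ => ∑ i, min (max (μ * p i - β * r i / α) 0) (a i))
    (Nc Nu : ℝ → Finset (Fin n))
    (hNc : ∀ μ, Nc μ = {i | 0 < μ * p i - β * r i / α ∧ μ * p i - β * r i / α < a i})
    (hNu : ∀ μ, Nu μ = {i | a i ≤ μ * p i - β * r i / α})
    (T : ℝ → ℝ)
    (hT : T = fun μ =>
      (1 + ∑ i ∈ Nc μ, β * r i / α - ∑ i ∈ Nu μ, a i) / ∑ i ∈ Nc μ, p i)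
    (μs : ℝ) (hμs : 0 < μs) (hroot : Q μs = 1)
    (huniq : ∀ μ : ℝ, 0 < μ → μ ≠ μs → Q μ ≠ 1)
    (μ : ℝ) (hμ : 0 < μ) (hden : 0 < ∑ i ∈ Nc μ, p i) :
    (μ < T μ ↔ μ < μs) ∧ (T μ < μ ↔ μs < μ) :=
  newton_bracketing_general n p r a hp ha α β Q hQ Nc Nu hNc hNu T hT μs hroot huniq μ hμ hden
end
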